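/- Let x, z_0 = 0, z_1, …, z_J ∈ ℝⁿ, ε > 0, and for each j ∈ {0,…,J} define η_j = n (∑_{l=1}^n 1/(|x_l − z_{jl}| + ε))⁻¹ and weights w_{ji} = η_j/(|x_i − z_{ji}| + ε). Let β_j ≥ 0 with ∑_{j=0}^J β_j = 1, s_j = |{i : x_i ≠ z_{ji}}|, s̄ = ∑_{j=0}^J β_j s_j, η̂ = min_j η_j, and α = (ε²/η̂²) ∑_{j=0}^J β_j ∑_{i : x_i ≠ z_{ji}} w_{ji}². Assume 0 < s̄ < n. Let g(x') = ∑_{j=0}^J β_j ∑_{i=1}^n w_{ji} |x'_i − z_{ji}| with subdifferential ∂g(x) = {u : g(y) ≥ g(x) + ⟨u, y − x⟩ for all y}. Then, for a standard Gaussian vector 𝗀 in ℝⁿ, inf_{τ ≥ 0} E_𝗀[dist²(𝗀, τ·∂g(x))] ≤ s̄ + 2α log(n/s̄) + s̄ (1 − s̄/n)/√(π log(n/s̄)), where dist(a, C) = inf_{u ∈ C} ‖a − u‖₂ and τ·C = {τ u : u ∈ C}. -/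

import Mathlib

/-!
At `τ = (ε / η̂) T` with `T = √(2 log (n / s̄))` we exhibit, for every Gaussian sample `a`, an
explicit subgradient of `g` at `x`: in each atom `j` and coordinate `i` take the sign of
`x i - z j i` on the support, and off the support the clipping of `a i / (τ w j i)` to `[-1, 1]`.
By Jensen over the convex weights `β`, `dist² (a, τ ∂g(x))` is then at most a `β`-average of
coordinatewise penalties: `(a i - τ w j i · sign)²` on the support, with mean `1 + τ² w j i²`,
and the soft-thresholding error `(|a i| - T)₊²` off it (there `τ w j i ≥ T`), with mean at most
`2 ψ(T) / T`. Averaging and plugging in `T` gives the bound, since `ψ(T) = (s̄ / n) / √(2π)`.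
-/

section

open MeasureTheory ProbabilityTheory Real Filter Set Topology
open scoped NNReal Pointwise

lemma integrable_sub_sq_gaussianReal (μ : ℝ) (v : ℝ≥0) (c : ℝ) :
    Integrable (fun t => (t - c) ^ 2) (gaussianReal μ v) :=
  ((memLp_id_gaussianReal 2).sub (memLp_const c)).integrable_sq

lemma integral_sub_sq_gaussianReal (μ : ℝ) (v : ℝ≥0) (c : ℝ) :
    ∫ t, (t - c) ^ 2 ∂gaussianReal μ v = v + (μ - c) ^ 2 := by
  have hvar : ∫ t, (t - μ) ^ 2 ∂gaussianReal μ v = v := by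
    simpa [integral_id_gaussianReal] using
      (variance_eq_integral (X := id) aemeasurable_id (μ := gaussianReal μ v)).symm.trans
        variance_id_gaussianReal
  have hid : Integrable (fun t : ℝ => t) (gaussianReal μ v) :=
    (memLp_id_gaussianReal 1).integrable le_rfl
  have hlin : Integrable (fun t => 2 * (μ - c) * (t - μ)) (gaussianReal μ v) :=
    (hid.sub (integrable_const μ)).const_mul _
  have hsq : Integrable (fun t => (t - μ) ^ 2 + 2 * (μ - c) * (t - μ)) (gaussianReal μ v) :=
    (integrable_sub_sq_gaussianReal μ v μ).add hlin
  calc ∫ t, (t - c) ^ 2 ∂gaussianReal μ v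
      = ∫ t, ((t - μ) ^ 2 + 2 * (μ - c) * (t - μ) + (μ - c) ^ 2) ∂gaussianReal μ v := by
        congr 1; ext t; ring
    _ = v + (μ - c) ^ 2 := by
        rw [integral_add hsq (integrable_const _),
          integral_add (integrable_sub_sq_gaussianReal μ v μ) hlin, integral_const_mul,
          integral_sub hid (integrable_const μ), hvar]
        simp [integral_id_gaussianReal]

lemma gaussianPDFReal_zero_one :
    gaussianPDFReal 0 1 = fun t => (√(2 * π))⁻¹ * rexp (-t ^ 2 / 2) := by
  ext t; simp [gaussianPDFReal]

lemma hasDerivAt_gaussianPDFReal_zero_one (t : ℝ) :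
    HasDerivAt (gaussianPDFReal 0 1) (-t * gaussianPDFReal 0 1 t) t := by
  have h : HasDerivAt (fun t : ℝ => -t ^ 2 / 2) (-t) t :=
    ((hasDerivAt_pow 2 t).neg.div_const 2).congr_deriv (by push_cast; ring)
  rw [gaussianPDFReal_zero_one]
  exact (h.exp.const_mul _).congr_deriv (by ring)

lemma tendsto_pow_mul_gaussianPDFReal_atTop (k : ℕ) :
    Tendsto (fun t => t ^ k * gaussianPDFReal 0 1 t) atTop (𝓝 0) := by
  have h := ((tendsto_rpow_abs_mul_exp_neg_mul_sq_cocompact one_half_pos k).mono_left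
    atTop_le_cocompact).const_mul (√(2 * π))⁻¹
  rw [mul_zero] at h
  refine h.congr' ?_
  filter_upwards [eventually_ge_atTop 0] with t ht
  rw [gaussianPDFReal_zero_one, abs_of_nonneg ht, rpow_natCast]
  ring_nf

lemma integral_max_sub_zero_sq_gaussianReal_le {T : ℝ} (hT : 0 < T) :
    ∫ t, max (t - T) 0 ^ 2 ∂gaussianReal 0 1 ≤ gaussianPDFReal 0 1 T / T := by
  -- `F'` majorizes `(t - T)² ψ` on `(T, ∞)` and has the closed-form antiderivative `F`,
  -- with `F T = -ψ T / T`
  set F : ℝ → ℝ := fun t => -((t - 2 * T + (1 + T ^ 2) * t⁻¹) * gaussianPDFReal 0 1 t)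
  set F' : ℝ → ℝ := fun t => ((t - T) ^ 2 + (1 + T ^ 2) / t ^ 2) * gaussianPDFReal 0 1 t
  have hF : ∀ t ∈ Ici T, HasDerivAt F (F' t) t := by
    intro t ht
    have ht0 : t ≠ 0 := (hT.trans_le ht).ne'
    have h := ((((hasDerivAt_id t).sub_const (2 * T)).add
      ((hasDerivAt_inv ht0).const_mul (1 + T ^ 2))).mul
        (hasDerivAt_gaussianPDFReal_zero_one t)).neg
    refine h.congr_deriv ?_
    simp only [F', id, Pi.add_apply]
    field_simp
    ring
  have hF'_nonneg : ∀ t ∈ Ioi T, 0 ≤ F' t := fun t _ =>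
    mul_nonneg (by positivity) (gaussianPDFReal_nonneg _ _ _)
  have hF_lim : Tendsto F atTop (𝓝 0) := by
    have h0 := tendsto_pow_mul_gaussianPDFReal_atTop 0
    have h1 := tendsto_pow_mul_gaussianPDFReal_atTop 1
    have := (((h1.sub (h0.const_mul (2 * T))).add
      ((tendsto_inv_atTop_zero.mul h0).const_mul (1 + T ^ 2)))).neg
    simp only [mul_zero, sub_zero, add_zero, neg_zero] at this
    refine this.congr fun t => ?_
    simp only [F, pow_zero, pow_one, one_mul]
    ring
  rw [integral_gaussianReal_eq_integral_smul one_ne_zero,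
    ← setIntegral_eq_integral_of_forall_compl_eq_zero (s := Ioi T) fun t ht => by
      rw [max_eq_right (by simpa using ht)]; simp]
  calc ∫ t in Ioi T, gaussianPDFReal 0 1 t • max (t - T) 0 ^ 2
      ≤ ∫ t in Ioi T, F' t := by
        refine integral_mono_of_nonneg
          (ae_of_all _ fun t => smul_nonneg (gaussianPDFReal_nonneg _ _ _) (sq_nonneg _))
          (integrableOn_Ioi_deriv_of_nonneg' hF hF'_nonneg hF_lim)
          ((ae_restrict_iff' measurableSet_Ioi).2 (ae_of_all _ fun t ht => ?_))
        have hTt : T < t := ht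
        dsimp only
        rw [smul_eq_mul, max_eq_left (by linarith), mul_comm]
        exact mul_le_mul_of_nonneg_right (by simp only [le_add_iff_nonneg_right]; positivity)
          (gaussianPDFReal_nonneg _ _ _)
    _ = 0 - F T := integral_Ioi_of_hasDerivAt_of_nonneg' hF hF'_nonneg hF_lim
    _ = gaussianPDFReal 0 1 T / T := by
        simp only [F]
        field_simp
        ring

lemma max_abs_sub_zero_sq {T : ℝ} (hT : 0 ≤ T) (t : ℝ) :
    max (|t| - T) 0 ^ 2 = max (t - T) 0 ^ 2 + max (-t - T) 0 ^ 2 := by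
  rcases le_total 0 t with ht | ht
  · rw [abs_of_nonneg ht, max_eq_right (a := -t - T) (by linarith)]; ring
  · rw [abs_of_nonpos ht, max_eq_right (a := t - T) (by linarith)]; ring

lemma integrable_max_sub_zero_sq_gaussianReal (μ : ℝ) (v : ℝ≥0) (c : ℝ) :
    Integrable (fun t => max (t - c) 0 ^ 2) (gaussianReal μ v) := by
  refine (integrable_sub_sq_gaussianReal μ v c).mono' (by fun_prop) (ae_of_all _ fun t => ?_)
  rw [norm_pow, Real.norm_eq_abs, sq_abs]
  rcases le_total (t - c) 0 with h | h <;> simp [h, sq_nonneg]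

lemma gaussianReal_zero_map_neg (v : ℝ≥0) :
    (gaussianReal 0 v).map (fun t => -t) = gaussianReal 0 v := by
  simpa using gaussianReal_map_neg (μ := 0) (v := v)

lemma integrable_comp_neg_gaussianReal {v : ℝ≥0} {f : ℝ → ℝ}
    (hf : Integrable f (gaussianReal 0 v)) : Integrable (fun t => f (-t)) (gaussianReal 0 v) := by
  rw [← gaussianReal_zero_map_neg] at hf
  exact (integrable_map_measure hf.1 (by fun_prop)).mp hf

lemma integral_comp_neg_gaussianReal {v : ℝ≥0} {f : ℝ → ℝ}
    (hf : AEStronglyMeasurable f (gaussianReal 0 v)) :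
    ∫ t, f (-t) ∂gaussianReal 0 v = ∫ t, f t ∂gaussianReal 0 v := by
  conv_rhs => rw [← gaussianReal_zero_map_neg]
  rw [← gaussianReal_zero_map_neg] at hf
  rw [integral_map (by fun_prop) hf]

lemma integrable_max_abs_sub_zero_sq_gaussianReal {T : ℝ} (hT : 0 ≤ T) :
    Integrable (fun t => max (|t| - T) 0 ^ 2) (gaussianReal 0 1) := by
  have h := integrable_max_sub_zero_sq_gaussianReal 0 1 T
  simp only [max_abs_sub_zero_sq hT]
  exact h.add (integrable_comp_neg_gaussianReal h)

lemma integral_max_abs_sub_zero_sq_gaussianReal_le {T : ℝ} (hT : 0 < T) :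
    ∫ t, max (|t| - T) 0 ^ 2 ∂gaussianReal 0 1 ≤ 2 * gaussianPDFReal 0 1 T / T := by
  have h := integrable_max_sub_zero_sq_gaussianReal 0 1 T
  simp only [max_abs_sub_zero_sq hT.le]
  rw [integral_add h (integrable_comp_neg_gaussianReal h),
    integral_comp_neg_gaussianReal (f := fun t => max (t - T) 0 ^ 2) h.1, mul_div_assoc]
  linarith [integral_max_sub_zero_sq_gaussianReal_le hT]

/- A subgradient of `|· - z|` at `a`. At the kink `a = z` it is chosen depending on `t` so that
`t - c * absSubgradient c a z t` is the soft-thresholding of `t` at level `c`. -/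
noncomputable def absSubgradient (c a z t : ℝ) : ℝ :=
  if a = z then max (min (t / c) 1) (-1) else SignType.sign (a - z)

lemma abs_absSubgradient_le_one (c a z t : ℝ) : |absSubgradient c a z t| ≤ 1 := by
  unfold absSubgradient
  split_ifs
  · exact abs_le.2 ⟨le_max_right _ _, max_le (min_le_right _ _) (by norm_num)⟩
  · rcases lt_trichotomy (a - z) 0 with h | h | h <;> simp [h]

lemma absSubgradient_mul_sub (c a z t : ℝ) : absSubgradient c a z t * (a - z) = |a - z| := by
  unfold absSubgradient
  split_ifs with h
  · simp [h]
  · exact sign_mul_self _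

lemma abs_sub_add_mul_le {v a y z : ℝ} (hv : |v| ≤ 1) (hva : v * (a - z) = |a - z|) :
    |a - z| + v * (y - a) ≤ |y - z| := by
  have : v * (y - z) ≤ |y - z| :=
    (le_abs_self _).trans ((abs_mul v _).trans_le (mul_le_of_le_one_left (abs_nonneg _) hv))
  linarith [show v * (y - a) = v * (y - z) - v * (a - z) by ring]

lemma abs_sub_mul_clamp_le {c T t : ℝ} (hT : 0 < T) (hc : T ≤ c) :
    |t - c * max (min (t / c) 1) (-1)| ≤ max (|t| - T) 0 := by
  have hc0 : 0 < c := hT.trans_le hc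
  rcases le_total t (-c) with h | h
  · have h1 : t / c ≤ -1 := by rw [div_le_iff₀ hc0]; linarith
    rw [min_eq_left (h1.trans (by norm_num)), max_eq_right h1, abs_of_nonpos (by linarith),
      abs_of_nonpos (by linarith)]
    exact le_max_of_le_left (by linarith)
  rcases le_total t c with h' | h'
  · rw [min_eq_left ((div_le_one hc0).2 h'), max_eq_left ((le_div_iff₀ hc0).2 (by linarith)),
      mul_div_cancel₀ _ hc0.ne', sub_self, abs_zero]
    exact le_max_right _ _
  · have h1 : 1 ≤ t / c := by rw [le_div_iff₀ hc0]; linarith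
    rw [min_eq_right h1, max_eq_left (by norm_num), abs_of_nonneg (by linarith),
      abs_of_nonneg (by linarith)]
    exact le_max_of_le_left (by linarith)

noncomputable def absSubgradientPenalty (T c a z t : ℝ) : ℝ :=
  if a = z then max (|t| - T) 0 ^ 2 else (t - c * SignType.sign (a - z)) ^ 2

lemma sq_sub_mul_absSubgradient_le {T c a z : ℝ} (hT : 0 < T) (hc : a = z → T ≤ c) (t : ℝ) :
    (t - c * absSubgradient c a z t) ^ 2 ≤ absSubgradientPenalty T c a z t := by
  unfold absSubgradient absSubgradientPenalty
  split_ifs with h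
  · rw [← sq_abs]
    exact pow_le_pow_left₀ (abs_nonneg _) (abs_sub_mul_clamp_le hT (hc h)) 2
  · exact le_rfl

lemma integrable_absSubgradientPenalty {T : ℝ} (hT : 0 ≤ T) (c a z : ℝ) :
    Integrable (absSubgradientPenalty T c a z) (gaussianReal 0 1) := by
  unfold absSubgradientPenalty
  split_ifs
  · exact integrable_max_abs_sub_zero_sq_gaussianReal hT
  · exact integrable_sub_sq_gaussianReal 0 1 _

lemma integral_absSubgradientPenalty_le {T : ℝ} (hT : 0 < T) (c a z : ℝ) :
    ∫ t, absSubgradientPenalty T c a z t ∂gaussianReal 0 1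
      ≤ if a = z then 2 * gaussianPDFReal 0 1 T / T else 1 + c ^ 2 := by
  unfold absSubgradientPenalty
  split_ifs with h
  · exact integral_max_abs_sub_zero_sq_gaussianReal_le hT
  · have hsign : (SignType.sign (a - z) : ℝ) ^ 2 = 1 := by
      rcases lt_or_gt_of_ne (sub_ne_zero.2 h) with h' | h' <;> simp [h']
    rw [integral_sub_sq_gaussianReal, NNReal.coe_one, zero_sub, neg_sq, mul_pow, hsign, mul_one]

section

variable {ι κ : Type*} [Fintype ι] [Fintype κ]

lemma sum_weighted_abs_sub_add_le {β : κ → ℝ} (hβ : ∀ j, 0 ≤ β j) {w : κ → ι → ℝ}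
    (hw : ∀ j i, 0 ≤ w j i) {x : ι → ℝ} {z v : κ → ι → ℝ} (hv : ∀ j i, |v j i| ≤ 1)
    (hvx : ∀ j i, v j i * (x i - z j i) = |x i - z j i|) (y : ι → ℝ) :
    ∑ j, β j * ∑ i, w j i * |x i - z j i| + ∑ i, (∑ j, β j * (w j i * v j i)) * (y i - x i)
      ≤ ∑ j, β j * ∑ i, w j i * |y i - z j i| := by
  calc _ = ∑ j, β j * ∑ i, w j i * (|x i - z j i| + v j i * (y i - x i)) := by
        simp only [Finset.sum_mul, Finset.mul_sum, mul_add, Finset.sum_add_distrib]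
        rw [Finset.sum_comm (s := Finset.univ (α := ι))]
        ring_nf
    _ ≤ _ := by
        gcongr with j _ i _
        · exact hβ j
        · exact hw j i
        · exact abs_sub_add_mul_le (hv j i) (hvx j i)

lemma infDist_sq_le_sum_sq {a u : EuclideanSpace ℝ ι} {S : Set (EuclideanSpace ℝ ι)}
    (hu : u ∈ S) : Metric.infDist a S ^ 2 ≤ ∑ i, (a i - u i) ^ 2 := by
  have h := pow_le_pow_left₀ Metric.infDist_nonneg (Metric.infDist_le_dist_of_mem (x := a) hu) 2
  simpa only [EuclideanSpace.dist_eq, Real.dist_eq, sq_abs,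
    sq_sqrt (Finset.sum_nonneg fun i _ => sq_nonneg (a i - u i))] using h

variable {β : κ → ℝ} {w : κ → ι → ℝ} {x : EuclideanSpace ℝ ι} {z : κ → EuclideanSpace ℝ ι}
  {g : EuclideanSpace ℝ ι → ℝ} {τ T : ℝ}

lemma infDist_sq_smul_subdifferential_le (hβ : ∀ j, 0 ≤ β j) (hβ1 : ∑ j, β j = 1)
    (hw : ∀ j i, 0 ≤ w j i) (hT : 0 < T) (hTw : ∀ j i, x i = z j i → T ≤ τ * w j i)
    (hg : ∀ y, g y = ∑ j, β j * ∑ i, w j i * |y i - z j i|) (a : EuclideanSpace ℝ ι) :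
    Metric.infDist a (τ • {u | ∀ y, g y ≥ g x + ∑ i, u i * (y i - x i)}) ^ 2
      ≤ ∑ i, ∑ j, β j * absSubgradientPenalty T (τ * w j i) (x i) (z j i) (a i) := by
  let v : κ → ι → ℝ := fun j i => absSubgradient (τ * w j i) (x i) (z j i) (a i)
  let u : EuclideanSpace ℝ ι := WithLp.toLp 2 fun i => ∑ j, β j * (w j i * v j i)
  have hu : u ∈ {u | ∀ y, g y ≥ g x + ∑ i, u i * (y i - x i)} := fun y => by
    rw [hg, hg]
    exact sum_weighted_abs_sub_add_le (x := x.ofLp) (z := fun j => (z j).ofLp) (v := v) hβ hw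
      (fun j i => abs_absSubgradient_le_one _ _ _ _) (fun j i => absSubgradient_mul_sub _ _ _ _) y
  have hcomb : ∀ i, a i - (τ • u) i = ∑ j, β j * (a i - τ * w j i * v j i) := fun i => by
    rw [Finset.sum_congr rfl fun j _ => show β j * (a i - τ * w j i * v j i)
        = β j * a i - τ * (β j * (w j i * v j i)) by ring,
      Finset.sum_sub_distrib, ← Finset.sum_mul, hβ1, one_mul, ← Finset.mul_sum]
    rfl
  calc _ ≤ ∑ i, (a i - (τ • u) i) ^ 2 := infDist_sq_le_sum_sq (smul_mem_smul_set hu)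
    _ ≤ ∑ i, ∑ j, β j * (a i - τ * w j i * v j i) ^ 2 := by
        gcongr with i
        rw [hcomb]
        simpa using (even_two.convexOn_pow (𝕜 := ℝ)).map_sum_le (fun j _ => hβ j) hβ1
          (fun _ _ => mem_univ _)
    _ ≤ _ := by
        gcongr with i _ j _
        · exact hβ j
        · exact sq_sub_mul_absSubgradient_le hT (hTw j i) _

lemma sum_sum_mul_ite_eq (hβ1 : ∑ j, β j = 1) (B : ℝ) :
    ∑ i, ∑ j, β j * (if x i = z j i then B else 1 + (τ * w j i) ^ 2)
      = ∑ j, β j * ((Finset.univ.filter fun i => x i ≠ z j i).card : ℝ)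
        + τ ^ 2 * ∑ j, β j * ∑ i ∈ Finset.univ.filter (fun i => x i ≠ z j i), w j i ^ 2
        + (Fintype.card ι - ∑ j, β j * ((Finset.univ.filter fun i => x i ≠ z j i).card : ℝ))
          * B := by
  have hcard : ∀ j, ((Finset.univ.filter fun i => x i = z j i).card : ℝ)
      = Fintype.card ι - (Finset.univ.filter fun i => x i ≠ z j i).card := fun j => by
    rw [eq_sub_iff_add_eq, ← Nat.cast_add, Finset.card_filter_add_card_filter_not,
      Finset.card_univ]
  have hrow : ∀ j, ∑ i, (if x i = z j i then B else 1 + (τ * w j i) ^ 2)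
      = (Finset.univ.filter fun i => x i ≠ z j i).card
        + τ ^ 2 * ∑ i ∈ Finset.univ.filter (fun i => x i ≠ z j i), w j i ^ 2
        + (Fintype.card ι - (Finset.univ.filter fun i => x i ≠ z j i).card) * B := fun j => by
    rw [Finset.sum_ite, Finset.sum_const, nsmul_eq_mul, hcard, Finset.sum_add_distrib,
      Finset.sum_const, nsmul_eq_mul, mul_one, Finset.mul_sum]
    simp only [mul_pow, ne_eq]
    ring
  rw [Finset.sum_comm]
  calc _ = ∑ j, (β j * ((Finset.univ.filter fun i => x i ≠ z j i).card : ℝ)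
        + τ ^ 2 * (β j * ∑ i ∈ Finset.univ.filter (fun i => x i ≠ z j i), w j i ^ 2)
        + (β j * Fintype.card ι - β j * (Finset.univ.filter fun i => x i ≠ z j i).card) * B) :=
        Finset.sum_congr rfl fun j _ => by rw [← Finset.mul_sum, hrow]; ring
    _ = _ := by
        rw [Finset.sum_add_distrib, Finset.sum_add_distrib, ← Finset.mul_sum, ← Finset.sum_mul,
          Finset.sum_sub_distrib, ← Finset.sum_mul, hβ1, one_mul]

theorem integral_infDist_sq_smul_subdifferential_le (hβ : ∀ j, 0 ≤ β j) (hβ1 : ∑ j, β j = 1)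
    (hw : ∀ j i, 0 ≤ w j i) (hT : 0 < T) (hTw : ∀ j i, x i = z j i → T ≤ τ * w j i)
    (hg : ∀ y, g y = ∑ j, β j * ∑ i, w j i * |y i - z j i|) :
    ∫ a : ι → ℝ, Metric.infDist ((EuclideanSpace.equiv ι ℝ).symm a)
        (τ • {u | ∀ y, g y ≥ g x + ∑ i, u i * (y i - x i)}) ^ 2
        ∂(Measure.pi fun _ => gaussianReal 0 1)
      ≤ ∑ j, β j * ((Finset.univ.filter fun i => x i ≠ z j i).card : ℝ)
        + τ ^ 2 * ∑ j, β j * ∑ i ∈ Finset.univ.filter (fun i => x i ≠ z j i), w j i ^ 2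
        + (Fintype.card ι - ∑ j, β j * ((Finset.univ.filter fun i => x i ≠ z j i).card : ℝ))
          * (2 * gaussianPDFReal 0 1 T / T) := by
  have hpen : ∀ i j, Integrable
      (fun a : ι → ℝ => β j * absSubgradientPenalty T (τ * w j i) (x i) (z j i) (a i))
      (Measure.pi fun _ => gaussianReal 0 1) := fun i j =>
    (integrable_comp_eval (integrable_absSubgradientPenalty hT.le _ _ _)).const_mul _
  calc _ ≤ ∫ a : ι → ℝ, ∑ i, ∑ j, β j * absSubgradientPenalty T (τ * w j i) (x i) (z j i) (a i)
        ∂(Measure.pi fun _ => gaussianReal 0 1) :=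
        integral_mono_of_nonneg (ae_of_all _ fun _ => sq_nonneg _)
          (integrable_finsetSum _ fun i _ => integrable_finsetSum _ fun j _ => hpen i j)
          (ae_of_all _ fun a => infDist_sq_smul_subdifferential_le hβ hβ1 hw hT hTw hg _)
    _ = ∑ i, ∑ j, β j * ∫ t, absSubgradientPenalty T (τ * w j i) (x i) (z j i) t
        ∂gaussianReal 0 1 := by
        rw [integral_finsetSum _ fun i _ => integrable_finsetSum _ fun j _ => hpen i j]
        refine Finset.sum_congr rfl fun i _ => ?_
        rw [integral_finsetSum _ fun j _ => hpen i j]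
        refine Finset.sum_congr rfl fun j _ => ?_
        rw [integral_const_mul,
          integral_comp_eval (integrable_absSubgradientPenalty hT.le _ _ _).1]
    _ ≤ ∑ i, ∑ j, β j * (if x i = z j i then 2 * gaussianPDFReal 0 1 T / T
          else 1 + (τ * w j i) ^ 2) := by
        gcongr with i _ j _
        · exact hβ j
        · exact integral_absSubgradientPenalty_le hT _ _ _
    _ = _ := sum_sum_mul_ite_eq hβ1 _

end

lemma sub_mul_two_gaussianPDFReal_sqrt_two_log {s m : ℝ} (hs : 0 < s) (hsm : s < m) :
    (m - s) * (2 * gaussianPDFReal 0 1 √(2 * log (m / s)) / √(2 * log (m / s)))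
      = s * (1 - s / m) / √(π * log (m / s)) := by
  have hm : 0 < m := hs.trans hsm
  have hL : 0 < log (m / s) := log_pos ((one_lt_div hs).2 hsm)
  have hexp : rexp (-√(2 * log (m / s)) ^ 2 / 2) = s / m := by
    rw [sq_sqrt (by positivity), neg_div, mul_div_cancel_left₀ _ two_ne_zero, exp_neg,
      exp_log (div_pos hm hs), inv_div]
  have hsqrt : √(2 * π) * √(2 * log (m / s)) = 2 * √(π * log (m / s)) := by
    rw [← sqrt_mul (by positivity), show 2 * π * (2 * log (m / s)) = 2 ^ 2 * (π * log (m / s))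
      by ring, sqrt_mul (by positivity), sqrt_sq zero_le_two]
  rw [gaussianPDFReal_zero_one]
  dsimp only
  rw [hexp, show √(π * log (m / s)) = √(2 * π) * √(2 * log (m / s)) / 2 by rw [hsqrt]; ring]
  field_simp

end

open MeasureTheory ProbabilityTheory Pointwise in
theorem stmt_12_general (n J : ℕ)
    (x : EuclideanSpace ℝ (Fin n)) (z : Fin (J + 1) → EuclideanSpace ℝ (Fin n))
    (ε : ℝ) (hε : 0 < ε)
    (η : Fin (J + 1) → ℝ)
    (hη : ∀ j, η j = n * (∑ l, (|x l - z j l| + ε)⁻¹)⁻¹)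
    (w : Fin (J + 1) → Fin n → ℝ)
    (hw : ∀ j i, w j i = η j / (|x i - z j i| + ε))
    (β : Fin (J + 1) → ℝ) (hβ : ∀ j, 0 ≤ β j) (hβ1 : ∑ j, β j = 1)
    (s : Fin (J + 1) → ℕ)
    (hs : ∀ j, s j = (Finset.univ.filter fun i => x i ≠ z j i).card)
    (sbar : ℝ) (hsbar : sbar = ∑ j, β j * s j)
    (ηhat : ℝ) (hηhat : ηhat = Finset.univ.inf' Finset.univ_nonempty η)
    (α : ℝ)
    (hα : α = ε ^ 2 / ηhat ^ 2 *
      ∑ j, β j * ∑ i ∈ Finset.univ.filter fun i => x i ≠ z j i, w j i ^ 2)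
    (hsbar_pos : 0 < sbar) (hsbar_lt : sbar < n)
    (g : EuclideanSpace ℝ (Fin n) → ℝ)
    (hg : ∀ x', g x' = ∑ j, β j * ∑ i, w j i * |x' i - z j i|)
    (subdiff : Set (EuclideanSpace ℝ (Fin n)))
    (hsub : subdiff =
      {u : EuclideanSpace ℝ (Fin n) | ∀ y, g y ≥ g x + ∑ i, u i * (y i - x i)}) :
    (⨅ τ : {t : ℝ // 0 ≤ t},
        ∫ gv : Fin n → ℝ,
          Metric.infDist ((EuclideanSpace.equiv (Fin n) ℝ).symm gv) ((τ : ℝ) • subdiff) ^ 2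
          ∂(Measure.pi fun _ => gaussianReal 0 1)) ≤
      sbar + 2 * α * Real.log (n / sbar) +
        sbar * (1 - sbar / n) / Real.sqrt (Real.pi * Real.log (n / sbar)) := by
  have hn : (0 : ℝ) < n := hsbar_pos.trans hsbar_lt
  have hη_pos : ∀ j, 0 < η j := fun j => by
    rw [hη j]
    exact mul_pos hn (inv_pos.2 (Finset.sum_pos (fun l _ => by positivity)
      ⟨⟨0, by exact_mod_cast hn⟩, Finset.mem_univ _⟩))
  have hηhat_pos : 0 < ηhat := hηhat ▸ (Finset.lt_inf'_iff _).2 fun j _ => hη_pos j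
  set L := Real.log (n / sbar)
  have hL : 0 < L := Real.log_pos ((one_lt_div hsbar_pos).2 hsbar_lt)
  set T := Real.sqrt (2 * L)
  have hT : 0 < T := Real.sqrt_pos.2 (by positivity)
  set τ := ε / ηhat * T
  -- off the support of `x - z j` the weight is `η j / ε ≥ ηhat / ε`
  have hTw : ∀ j i, x i = z j i → T ≤ τ * w j i := fun j i hxz => by
    rw [hw, hxz, sub_self, abs_zero, zero_add,
      show ε / ηhat * T * (η j / ε) = T * (η j / ηhat) by field_simp]
    exact le_mul_of_one_le_right hT.le
      ((one_le_div hηhat_pos).2 (hηhat ▸ Finset.inf'_le _ (Finset.mem_univ j)))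
  have hτα : τ ^ 2 * ∑ j, β j * ∑ i ∈ Finset.univ.filter (fun i => x i ≠ z j i), w j i ^ 2
      = 2 * α * L := by
    rw [hα, mul_pow, div_pow, Real.sq_sqrt (by positivity)]; ring
  subst hsub
  refine (ciInf_le ⟨0, ?_⟩ ⟨τ, by positivity⟩).trans ?_
  · rintro _ ⟨_, rfl⟩
    exact integral_nonneg fun _ => sq_nonneg _
  refine (integral_infDist_sq_smul_subdifferential_le hβ hβ1
    (fun j i => hw j i ▸ (div_pos (hη_pos j) (by positivity)).le) hT hTw hg).trans_eq ?_
  simp only [← hs, ← hsbar, Fintype.card_fin, hτα]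
  rw [sub_mul_two_gaussianPDFReal_sqrt_two_log hsbar_pos hsbar_lt]

open MeasureTheory ProbabilityTheory Pointwise in
theorem stmt_12 (n J : ℕ) (hn : 0 < n)
    (x : EuclideanSpace ℝ (Fin n)) (z : Fin (J + 1) → EuclideanSpace ℝ (Fin n))
    (hz0 : z 0 = 0) (ε : ℝ) (hε : 0 < ε)
    (η : Fin (J + 1) → ℝ)
    (hη : ∀ j, η j = n * (∑ l, (|x l - z j l| + ε)⁻¹)⁻¹)
    (w : Fin (J + 1) → Fin n → ℝ)
    (hw : ∀ j i, w j i = η j / (|x i - z j i| + ε))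
    (β : Fin (J + 1) → ℝ) (hβ : ∀ j, 0 ≤ β j) (hβ1 : ∑ j, β j = 1)
    (s : Fin (J + 1) → ℕ)
    (hs : ∀ j, s j = (Finset.univ.filter fun i => x i ≠ z j i).card)
    (sbar : ℝ) (hsbar : sbar = ∑ j, β j * s j)
    (ηhat : ℝ) (hηhat : ηhat = Finset.univ.inf' Finset.univ_nonempty η)
    (α : ℝ)
    (hα : α = ε ^ 2 / ηhat ^ 2 *
      ∑ j, β j * ∑ i ∈ Finset.univ.filter fun i => x i ≠ z j i, w j i ^ 2)
    (hsbar_pos : 0 < sbar) (hsbar_lt : sbar < n)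
    (g : EuclideanSpace ℝ (Fin n) → ℝ)
    (hg : ∀ x', g x' = ∑ j, β j * ∑ i, w j i * |x' i - z j i|)
    (subdiff : Set (EuclideanSpace ℝ (Fin n)))
    (hsub : subdiff =
      {u : EuclideanSpace ℝ (Fin n) | ∀ y, g y ≥ g x + ∑ i, u i * (y i - x i)}) :
    (⨅ τ : {t : ℝ // 0 ≤ t},
        ∫ gv : Fin n → ℝ,
          Metric.infDist ((EuclideanSpace.equiv (Fin n) ℝ).symm gv) ((τ : ℝ) • subdiff) ^ 2
          ∂(Measure.pi fun _ => gaussianReal 0 1)) ≤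
      sbar + 2 * α * Real.log (n / sbar) +
        sbar * (1 - sbar / n) / Real.sqrt (Real.pi * Real.log (n / sbar)) :=
  stmt_12_general n J x z ε hε η hη w hw β hβ hβ1 s hs sbar hsbar ηhat hηhat α hα hsbar_pos hsbar_lt
    g hg subdiff hsub
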